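/- Let 𝒜 and ℬ be families of subsets of [n] = {1,...,n} that are cross-IU, with |𝒜| ≥ |ℬ|. Then |𝒜| + 3·|ℬ| ≤ 2^n. -/

import Mathlib

/-!
Replace `ℬ` by the family `𝒞` of complements of its members: cross-IU says exactly that no member
of `𝒜` is comparable with a member of `𝒞`. Hence `𝒜` avoids both the down-closure `D` and the
up-closure `U` of `𝒞`, so `|𝒜| + |D ∪ U| ≤ 2^n`, while `𝒞 ⊆ D ∩ U`. By the Harris–Kleitman
inequality `2^n |D ∩ U| ≤ |D| |U|`, and optimising over `|D|, |U|` gives the bound: if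
`|D| + |U| ≤ 2^n` then `4|ℬ| ≤ |D| + |U|`, otherwise `4|𝒜| ≤ 2^n`.
-/

open Finset

lemma add_three_mul_le_of_mul_le_mul {a b d u k N : ℕ} (hN : 0 < N) (hd : d ≤ N) (hu : u ≤ N)
    (hsum : a + d + u ≤ N + k) (hba : b ≤ a) (hbk : b ≤ k) (hk : N * k ≤ d * u) :
    a + 3 * b ≤ N := by
  -- Both cases rest on AM-GM, `4 d u ≤ (d + u)²`.
  rcases le_total (d + u) N with hsmall | hlarge
  · have h4k : N * (4 * k) ≤ N * (d + u) := by nlinarith [sq_nonneg ((d : ℤ) - u)]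
    have := Nat.le_of_mul_le_mul_left h4k hN
    omega
  · -- `4 N a ≤ 4 (N - d)(N - u) ≤ (2N - d - u)² ≤ N²`
    have h4a : N * (4 * a) ≤ N * N := by nlinarith [sq_nonneg ((d : ℤ) - u)]
    have := Nat.le_of_mul_le_mul_left h4a hN
    omega

section Closures

variable {α : Type*} [DecidableEq α] [Fintype α]

def downClosure (𝒞 : Finset (Finset α)) : Finset (Finset α) := {s | ∃ c ∈ 𝒞, s ⊆ c}

def upClosure (𝒞 : Finset (Finset α)) : Finset (Finset α) := {s | ∃ c ∈ 𝒞, c ⊆ s}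

variable {𝒜 𝒞 : Finset (Finset α)}

@[simp] lemma mem_downClosure {s : Finset α} : s ∈ downClosure 𝒞 ↔ ∃ c ∈ 𝒞, s ⊆ c := by
  simp [downClosure]

@[simp] lemma mem_upClosure {s : Finset α} : s ∈ upClosure 𝒞 ↔ ∃ c ∈ 𝒞, c ⊆ s := by
  simp [upClosure]

lemma isLowerSet_downClosure : IsLowerSet (downClosure 𝒞 : Set (Finset α)) := by
  intro s t hts hs
  obtain ⟨c, hc, hsc⟩ := mem_downClosure.1 hs
  exact mem_downClosure.2 ⟨c, hc, hts.trans hsc⟩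

lemma isUpperSet_upClosure : IsUpperSet (upClosure 𝒞 : Set (Finset α)) := by
  intro s t hst hs
  obtain ⟨c, hc, hcs⟩ := mem_upClosure.1 hs
  exact mem_upClosure.2 ⟨c, hc, hcs.trans hst⟩

lemma subset_downClosure_inter_upClosure : 𝒞 ⊆ downClosure 𝒞 ∩ upClosure 𝒞 := fun c hc ↦
  mem_inter.2 ⟨mem_downClosure.2 ⟨c, hc, subset_rfl⟩, mem_upClosure.2 ⟨c, hc, subset_rfl⟩⟩

lemma disjoint_downClosure_union_upClosure (h : ∀ A ∈ 𝒜, ∀ C ∈ 𝒞, ¬A ⊆ C ∧ ¬C ⊆ A) :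
    Disjoint 𝒜 (downClosure 𝒞 ∪ upClosure 𝒞) := by
  refine disjoint_left.2 fun A hA hA' ↦ ?_
  rcases mem_union.1 hA' with hdown | hup
  · obtain ⟨C, hC, hAC⟩ := mem_downClosure.1 hdown
    exact (h A hA C hC).1 hAC
  · obtain ⟨C, hC, hCA⟩ := mem_upClosure.1 hup
    exact (h A hA C hC).2 hCA

theorem card_add_three_mul_card_le_of_forall_not_subset
    (h : ∀ A ∈ 𝒜, ∀ C ∈ 𝒞, ¬A ⊆ C ∧ ¬C ⊆ A) (hcard : #𝒞 ≤ #𝒜) :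
    #𝒜 + 3 * #𝒞 ≤ 2 ^ Fintype.card α := by
  set D := downClosure 𝒞
  set U := upClosure 𝒞
  have card_le_pow (𝒮 : Finset (Finset α)) : #𝒮 ≤ 2 ^ Fintype.card α := by
    simpa [Fintype.card_finset] using card_le_univ 𝒮
  have hsum : #𝒜 + #D + #U ≤ 2 ^ Fintype.card α + #(D ∩ U) := by
    have hdisj : #(𝒜 ∪ (D ∪ U)) = #𝒜 + #(D ∪ U) :=
      card_union_of_disjoint (disjoint_downClosure_union_upClosure h)
    have hle := card_le_pow (𝒜 ∪ (D ∪ U))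
    have hinclexcl := card_inter_add_card_union D U
    omega
  exact add_three_mul_le_of_mul_le_mul (by positivity) (card_le_pow D) (card_le_pow U) hsum hcard
    (card_le_card subset_downClosure_inter_upClosure)
    (isLowerSet_downClosure.card_inter_le_finset isUpperSet_upClosure)

end Closures

/-- If `𝒜, ℬ` are cross-IU families of subsets of `[n]` with `|𝒜| ≥ |ℬ|`,
then `|𝒜| + 3|ℬ| ≤ 2^n`. -/
theorem stmt_12 (n : ℕ) (𝒜 ℬ : Finset (Finset (Fin n)))
    (hIU : ∀ A ∈ 𝒜, ∀ B ∈ ℬ, A ∩ B ≠ ∅ ∧ A ∪ B ≠ Finset.univ)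
    (hcard : ℬ.card ≤ 𝒜.card) :
    𝒜.card + 3 * ℬ.card ≤ 2 ^ n := by
  open FinsetFamily in
  have h : ∀ A ∈ 𝒜, ∀ C ∈ ℬᶜˢ, ¬A ⊆ C ∧ ¬C ⊆ A := by
    intro A hA C hC
    obtain ⟨hinter, hunion⟩ := hIU A hA Cᶜ (mem_compls.1 hC)
    rw [Ne, ← disjoint_iff_inter_eq_empty, ← le_compl_iff_disjoint_right, compl_compl] at hinter
    rw [Ne, ← top_eq_univ, ← sup_eq_union, ← codisjoint_iff, codisjoint_iff_compl_le_left,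
      compl_compl] at hunion
    exact ⟨hinter, hunion⟩
  simpa using card_add_three_mul_card_le_of_forall_not_subset h (by simpa using hcard)
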